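/- arXiv:1211.1514 — 5 statements merged into one kernel-verified Lean document; each statement's English description precedes it below -/
import Mathlib

section
/- Let α > 1, β > 1 with α + β = 2* where 2* = 2N/(N-2), N ≥ 3. For every ε > 0 there is a constant C > 0 (depending only on α, β, ε) such that for all real numbers a₁, a₂, b₁, b₂: | |a₁+a₂|^α |b₁+b₂|^β − |a₁|^α |b₁|^β | ≤ C ε (|a₁|^{2*} + |a₂|^{2*} + |b₁|^{2*} + |b₂|^{2*}) + C ε^{1−2*} (|a₂|^{2*} + |b₂|^{2*}). -/
/-! Write the difference as `(A^α - A₁^α) B^β + A₁^α (B^β - B₁^β)` with `A = |a₁ + a₂|`,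
`A₁ = |a₁|`, and similarly for `b`. Since all four bases are at most
`S = |a₁| + |a₂| + |b₁| + |b₂|`, the tangent-line bound `|x^p - y^p| ≤ p m^(p-1) |x - y|`
controls it by `(α|a₂| + β|b₂|) S^(p-1)`, where `p = α + β = 2*`. Young's inequality
`S^(p-1) t ≤ ε S^p + ε^(1-p) t^p` and the power-mean bound `S^p ≤ 4^(p-1) Σ |·|^p` finish it. -/

open Real

theorem rpow_sub_rpow_le_mul_rpow_sub_one_mul {p x y : ℝ} (hp : 1 ≤ p) (hy : 0 ≤ y)
    (hyx : y ≤ x) : x ^ p - y ^ p ≤ p * x ^ (p - 1) * (x - y) := by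
  rcases (hy.trans hyx).eq_or_lt with rfl | hx
  · obtain rfl : y = 0 := le_antisymm hyx hy
    simp
  · -- Bernoulli's inequality for `(y / x) ^ p`
    have hb := one_add_mul_self_le_rpow_one_add (s := y / x - 1)
      (by linarith [div_nonneg hy hx.le]) hp
    rw [add_sub_cancel, div_rpow hy hx.le, le_div_iff₀ (rpow_pos_of_pos hx p)] at hb
    have hxp : x ^ p = x ^ (p - 1) * x := by
      rw [← rpow_add_one hx.ne', sub_add_cancel]
    rw [hxp] at hb ⊢
    field_simp at hb
    nlinarith

theorem abs_rpow_sub_rpow_le {p x y m : ℝ} (hp : 1 ≤ p) (hx : 0 ≤ x) (hy : 0 ≤ y)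
    (hxm : x ≤ m) (hym : y ≤ m) : |x ^ p - y ^ p| ≤ p * m ^ (p - 1) * |x - y| := by
  wlog hyx : y ≤ x generalizing x y
  · rw [abs_sub_comm, abs_sub_comm x]
    exact this hy hx hym hxm (le_of_not_ge hyx)
  rw [abs_of_nonneg (sub_nonneg.2 (rpow_le_rpow hy hyx (by linarith))),
    abs_of_nonneg (sub_nonneg.2 hyx)]
  calc x ^ p - y ^ p ≤ p * x ^ (p - 1) * (x - y) :=
        rpow_sub_rpow_le_mul_rpow_sub_one_mul hp hy hyx
    _ ≤ p * m ^ (p - 1) * (x - y) := by gcongr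

-- Young's inequality with a parameter: according as `y ≤ ε x` or not, one of the two terms
-- already dominates.
theorem rpow_sub_one_mul_le {p x y ε : ℝ} (hp : 1 ≤ p) (hx : 0 ≤ x) (hy : 0 ≤ y) (hε : 0 < ε) :
    x ^ (p - 1) * y ≤ ε * x ^ p + ε ^ (1 - p) * y ^ p := by
  rcases le_total y (ε * x) with h | h
  · have : x ^ (p - 1) * y ≤ ε * x ^ p :=
      calc x ^ (p - 1) * y ≤ x ^ (p - 1) * (ε * x) := by gcongr
        _ = ε * x ^ p := by
          rw [mul_left_comm, ← rpow_add_one' hx (by linarith), sub_add_cancel]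
    have : 0 ≤ ε ^ (1 - p) * y ^ p := by positivity
    linarith
  · have : x ^ (p - 1) * y ≤ ε ^ (1 - p) * y ^ p :=
      calc x ^ (p - 1) * y ≤ (y / ε) ^ (p - 1) * y := by
            gcongr
            rwa [le_div_iff₀' hε]
        _ = ε ^ (1 - p) * y ^ p := by
          rw [div_rpow hy hε.le, show 1 - p = -(p - 1) by ring, rpow_neg hε.le, div_mul_eq_mul_div,
            ← rpow_add_one' hy (by linarith), sub_add_cancel, div_eq_inv_mul]
    have : 0 ≤ ε * x ^ p := by positivity
    linarith

theorem add_add_add_rpow_le {p : ℝ} (hp : 1 ≤ p) (a b c d : ℝ) :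
    (|a| + |b| + |c| + |d|) ^ p ≤ 4 ^ (p - 1) * (|a| ^ p + |b| ^ p + |c| ^ p + |d| ^ p) := by
  simpa [Fin.sum_univ_four, add_assoc] using
    Real.rpow_sum_le_const_mul_sum_rpow Finset.univ ![a, b, c, d] hp

theorem abs_rpow_mul_rpow_sub_le {α β : ℝ} (hα : 1 ≤ α) (hβ : 1 ≤ β) (a₁ a₂ b₁ b₂ : ℝ) :
    |(|a₁ + a₂| ^ α * |b₁ + b₂| ^ β) - |a₁| ^ α * |b₁| ^ β| ≤
      (α * |a₂| + β * |b₂|) * (|a₁| + |a₂| + |b₁| + |b₂|) ^ (α + β - 1) := by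
  set S := |a₁| + |a₂| + |b₁| + |b₂|
  have hS : 0 ≤ S := by positivity
  have ha : |a₁ + a₂| ≤ S := by linarith [abs_add_le a₁ a₂, abs_nonneg b₁, abs_nonneg b₂]
  have hb : |b₁ + b₂| ≤ S := by linarith [abs_add_le b₁ b₂, abs_nonneg a₁, abs_nonneg a₂]
  have ha₁ : |a₁| ≤ S := by linarith [abs_nonneg a₂, abs_nonneg b₁, abs_nonneg b₂]
  have hb₁ : |b₁| ≤ S := by linarith [abs_nonneg a₁, abs_nonneg a₂, abs_nonneg b₂]
  have hda : |(|a₁ + a₂| ^ α - |a₁| ^ α)| ≤ α * S ^ (α - 1) * |a₂| :=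
    (abs_rpow_sub_rpow_le hα (abs_nonneg _) (abs_nonneg _) ha ha₁).trans <|
      mul_le_mul_of_nonneg_left (by simpa using abs_abs_sub_abs_le_abs_sub (a₁ + a₂) a₁)
        (by positivity)
  have hdb : |(|b₁ + b₂| ^ β - |b₁| ^ β)| ≤ β * S ^ (β - 1) * |b₂| :=
    (abs_rpow_sub_rpow_le hβ (abs_nonneg _) (abs_nonneg _) hb hb₁).trans <|
      mul_le_mul_of_nonneg_left (by simpa using abs_abs_sub_abs_le_abs_sub (b₁ + b₂) b₁)
        (by positivity)
  calc |(|a₁ + a₂| ^ α * |b₁ + b₂| ^ β) - |a₁| ^ α * |b₁| ^ β|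
      = |(|a₁ + a₂| ^ α - |a₁| ^ α) * |b₁ + b₂| ^ β + |a₁| ^ α * (|b₁ + b₂| ^ β - |b₁| ^ β)| := by
        ring_nf
    _ ≤ |(|a₁ + a₂| ^ α - |a₁| ^ α)| * |b₁ + b₂| ^ β + |a₁| ^ α * |(|b₁ + b₂| ^ β - |b₁| ^ β)| := by
        grw [abs_add_le, abs_mul, abs_mul, abs_of_nonneg (by positivity : 0 ≤ |b₁ + b₂| ^ β),
          abs_of_nonneg (by positivity : 0 ≤ |a₁| ^ α)]
    _ ≤ α * S ^ (α - 1) * |a₂| * S ^ β + S ^ α * (β * S ^ (β - 1) * |b₂|) := by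
        gcongr
    _ = α * |a₂| * (S ^ (α - 1) * S ^ β) + β * |b₂| * (S ^ α * S ^ (β - 1)) := by ring
    _ = (α * |a₂| + β * |b₂|) * S ^ (α + β - 1) := by
        rw [← rpow_add' hS (by linarith), ← rpow_add' hS (by linarith)]
        ring_nf

theorem abs_rpow_mul_rpow_sub_le_eps {α β p ε : ℝ} (hα : 1 ≤ α) (hβ : 1 ≤ β) (hp : α + β = p)
    (hε : 0 < ε) (a₁ a₂ b₁ b₂ : ℝ) :
    |(|a₁ + a₂| ^ α * |b₁ + b₂| ^ β) - |a₁| ^ α * |b₁| ^ β| ≤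
      p * 4 ^ (p - 1) * ε * (|a₁| ^ p + |a₂| ^ p + |b₁| ^ p + |b₂| ^ p)
        + p * 4 ^ (p - 1) * ε ^ (1 - p) * (|a₂| ^ p + |b₂| ^ p) := by
  have hp₁ : 1 ≤ p := by linarith
  have h4 : 1 ≤ (4 : ℝ) ^ (p - 1) := one_le_rpow (by norm_num) (by linarith)
  have hα_le : α ≤ p * 4 ^ (p - 1) := by nlinarith
  have hβ_le : β ≤ p * 4 ^ (p - 1) := by nlinarith
  set S := |a₁| + |a₂| + |b₁| + |b₂|
  have hS : 0 ≤ S := by positivity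
  calc |(|a₁ + a₂| ^ α * |b₁ + b₂| ^ β) - |a₁| ^ α * |b₁| ^ β|
      ≤ (α * |a₂| + β * |b₂|) * S ^ (p - 1) := hp ▸ abs_rpow_mul_rpow_sub_le hα hβ a₁ a₂ b₁ b₂
    _ = α * (S ^ (p - 1) * |a₂|) + β * (S ^ (p - 1) * |b₂|) := by ring
    _ ≤ α * (ε * S ^ p + ε ^ (1 - p) * |a₂| ^ p) + β * (ε * S ^ p + ε ^ (1 - p) * |b₂| ^ p) := by
        gcongr <;> exact rpow_sub_one_mul_le hp₁ hS (abs_nonneg _) hε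
    _ = p * ε * S ^ p + ε ^ (1 - p) * (α * |a₂| ^ p + β * |b₂| ^ p) := by rw [← hp]; ring
    _ ≤ p * ε * (4 ^ (p - 1) * (|a₁| ^ p + |a₂| ^ p + |b₁| ^ p + |b₂| ^ p))
          + ε ^ (1 - p) * (p * 4 ^ (p - 1) * |a₂| ^ p + p * 4 ^ (p - 1) * |b₂| ^ p) := by
        grw [add_add_add_rpow_le hp₁, hα_le, hβ_le]
    _ = _ := by ring

theorem pointwise_brezis_lieb_estimate_general (N : ℕ) (α β : ℝ)
    (hα : 1 < α) (hβ : 1 < β) (hαβ : α + β = 2 * N / ((N : ℝ) - 2))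
    (ε : ℝ) (hε : 0 < ε) :
    ∃ C : ℝ, 0 < C ∧ ∀ a₁ a₂ b₁ b₂ : ℝ,
      |(|a₁ + a₂| ^ α * |b₁ + b₂| ^ β) - |a₁| ^ α * |b₁| ^ β| ≤
        C * ε * (|a₁| ^ (2 * N / ((N : ℝ) - 2)) + |a₂| ^ (2 * N / ((N : ℝ) - 2))
            + |b₁| ^ (2 * N / ((N : ℝ) - 2)) + |b₂| ^ (2 * N / ((N : ℝ) - 2)))
          + C * ε ^ (1 - 2 * N / ((N : ℝ) - 2)) *
            (|a₂| ^ (2 * N / ((N : ℝ) - 2)) + |b₂| ^ (2 * N / ((N : ℝ) - 2))) := by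
  set p : ℝ := 2 * N / ((N : ℝ) - 2)
  have hp : 0 < p := by linarith
  exact ⟨p * 4 ^ (p - 1), by positivity, abs_rpow_mul_rpow_sub_le_eps hα.le hβ.le hαβ hε⟩

/-- Pointwise inequality underlying the Brezis–Lieb lemma for the coupled term
`|u|^α |v|^β`, with `α, β > 1`, `α + β = 2* = 2N/(N-2)`: for every `ε > 0` there is
`C > 0` (depending only on `α, β, ε`) such that for all reals `a₁, a₂, b₁, b₂`,
`| |a₁+a₂|^α |b₁+b₂|^β − |a₁|^α |b₁|^β | ≤ Cε(|a₁|^{2*}+|a₂|^{2*}+|b₁|^{2*}+|b₂|^{2*})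
  + Cε^{1−2*}(|a₂|^{2*}+|b₂|^{2*})`. -/
theorem pointwise_brezis_lieb_estimate (N : ℕ) (hN : 3 ≤ N) (α β : ℝ)
    (hα : 1 < α) (hβ : 1 < β) (hαβ : α + β = 2 * N / ((N : ℝ) - 2))
    (ε : ℝ) (hε : 0 < ε) :
    ∃ C : ℝ, 0 < C ∧ ∀ a₁ a₂ b₁ b₂ : ℝ,
      |(|a₁ + a₂| ^ α * |b₁ + b₂| ^ β) - |a₁| ^ α * |b₁| ^ β| ≤
        C * ε * (|a₁| ^ (2 * N / ((N : ℝ) - 2)) + |a₂| ^ (2 * N / ((N : ℝ) - 2))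
            + |b₁| ^ (2 * N / ((N : ℝ) - 2)) + |b₂| ^ (2 * N / ((N : ℝ) - 2)))
          + C * ε ^ (1 - 2 * N / ((N : ℝ) - 2)) *
            (|a₂| ^ (2 * N / ((N : ℝ) - 2)) + |b₂| ^ (2 * N / ((N : ℝ) - 2))) :=
  pointwise_brezis_lieb_estimate_general N α β hα hβ hαβ ε hε
end

section
/- Brezis–Lieb lemma for the coupling term: let Ω ⊆ ℝ^N be open, N ≥ 3, α, β > 1 with α+β = 2* = 2N/(N-2). Suppose (u_n), (v_n) are bounded sequences in L^{2*}(Ω) converging almost everywhere to u and v respectively. Then lim_{n→∞} ∫_Ω (|u_n|^α |v_n|^β − |u_n − u|^α |v_n − v|^β) dx = ∫_Ω |u|^α |v|^β dx. -/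
open MeasureTheory Real Filter Topology Set
open scoped ENNReal NNReal

/-!
The coupling term `j (a, b) = |a| ^ α * |b| ^ β` is continuous and positively homogeneous of
degree `p = α + β` on `ℝ × ℝ`. For such a `j`, uniform continuity on a compact ball and scaling
give the Brezis–Lieb inequality `|j (x + y) - j x| ≤ ε ‖x‖ ^ p + C_ε ‖y‖ ^ p`. Applied with
`x = f n - f` and `y = f`, where `f n = (u n, v n)` and `f` is its a.e. limit (in `L^p` by Fatou),
it bounds `|j (f n) - j (f n - f) - j f|` by `ε ‖f n - f‖ ^ p`, whose integral is bounded
uniformly in `n`, plus an integrable function independent of `n`. Since the left-hand side tends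
to `0` a.e., dominated convergence applied to its excess over `ε ‖f n - f‖ ^ p` shows that its
integral tends to `0`.
-/

section DominatedConvergence

variable {X : Type*} [MeasurableSpace X] {μ : Measure X}

theorem tendsto_integral_of_forall_le_mul_add {F W : ℕ → X → ℝ} {M : ℝ}
    (hF : ∀ n, AEStronglyMeasurable (F n) μ) (hF0 : ∀ n, 0 ≤ᵐ[μ] F n)
    (hlim : ∀ᵐ x ∂μ, Tendsto (F · x) atTop (𝓝 0))
    (hW : ∀ n, Integrable (W n) μ) (hW0 : ∀ n, 0 ≤ᵐ[μ] W n)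
    (hWM : ∀ n, ∫ x, W n x ∂μ ≤ M)
    (hdom : ∀ ε > 0, ∃ G, Integrable G μ ∧ ∀ n, ∀ᵐ x ∂μ, F n x ≤ ε * W n x + G x) :
    Tendsto (fun n => ∫ x, F n x ∂μ) atTop (𝓝 0) := by
  have hM0 : 0 ≤ M := (integral_nonneg_of_ae (hW0 0)).trans (hWM 0)
  refine tendsto_order.2 ⟨fun a ha => Eventually.of_forall fun n =>
    ha.trans_le (integral_nonneg_of_ae (hF0 n)), fun a ha => ?_⟩
  set ε := a / (2 * (M + 1))
  have hε : 0 < ε := by positivity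
  have hεM : ε * M < a / 2 := by
    rw [div_mul_eq_mul_div, div_lt_iff₀ (by positivity)]; nlinarith
  obtain ⟨G, hG, hFG⟩ := hdom ε hε
  -- the part of `F n` not absorbed by `ε * W n` is dominated by `|G|` and tends to `0`
  set g : ℕ → X → ℝ := fun n x => max (F n x - ε * W n x) 0
  have hg_meas : ∀ n, AEStronglyMeasurable (g n) μ := fun n =>
    ((hF n).sub ((hW n).1.const_mul ε)).sup aestronglyMeasurable_const
  have hg_le : ∀ n, ∀ᵐ x ∂μ, ‖g n x‖ ≤ |G x| := fun n => by
    filter_upwards [hFG n] with x hx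
    rw [Real.norm_eq_abs, abs_of_nonneg (le_max_right _ _)]
    exact max_le (by linarith [le_abs_self (G x)]) (abs_nonneg _)
  have hg_tendsto : Tendsto (fun n => ∫ x, g n x ∂μ) atTop (𝓝 0) := by
    rw [← integral_zero X ℝ]
    refine tendsto_integral_of_dominated_convergence _ hg_meas hG.abs hg_le ?_
    filter_upwards [hlim, ae_all_iff.2 hF0, ae_all_iff.2 hW0] with x hx hF0x hW0x
    refine squeeze_zero (fun n => le_max_right _ _) (fun n => ?_) hx
    have : 0 ≤ ε * W n x := mul_nonneg hε.le (hW0x n)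
    exact max_le (by linarith) (hF0x n)
  have hF_le : ∀ n, ∫ x, F n x ∂μ ≤ ∫ x, g n x ∂μ + ε * M := by
    intro n
    have hg_int : Integrable (g n) μ := hG.abs.mono' (hg_meas n) (hg_le n)
    have hF_int : Integrable (F n) μ := (((hW n).const_mul ε).add hG).mono' (hF n) <| by
      filter_upwards [hF0 n, hFG n] with x h0 hx
      rwa [Real.norm_eq_abs, abs_of_nonneg h0]
    calc ∫ x, F n x ∂μ ≤ ∫ x, (g n x + ε * W n x) ∂μ :=
          integral_mono hF_int (hg_int.add ((hW n).const_mul ε)) fun x => by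
            simp only [g]; linarith [le_max_left (F n x - ε * W n x) 0]
      _ = ∫ x, g n x ∂μ + ε * ∫ x, W n x ∂μ := by
          rw [integral_add hg_int ((hW n).const_mul ε), integral_const_mul]
      _ ≤ ∫ x, g n x ∂μ + ε * M := by gcongr; exact hWM n
  filter_upwards [hg_tendsto.eventually_lt_const (half_pos ha)] with n hn
  linarith [hF_le n]

end DominatedConvergence

namespace MeasureTheory

variable {X E F : Type*} [MeasurableSpace X] {μ : Measure X} [NormedAddCommGroup E]
  [NormedAddCommGroup F]

theorem MemLp.integrable_norm_rpow_of_ofReal {f : X → E} {p : ℝ} (hp : 0 < p)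
    (hf : MemLp f (ENNReal.ofReal p) μ) : Integrable (fun x => ‖f x‖ ^ p) μ := by
  simpa [ENNReal.toReal_ofReal hp.le] using
    hf.integrable_norm_rpow (by simpa using hp) ENNReal.ofReal_ne_top

theorem MemLp.integral_norm_rpow_le_of_ofReal {f : X → E} {p : ℝ} (hp : 0 < p)
    (hf : MemLp f (ENNReal.ofReal p) μ) {C : ℝ≥0∞} (hC : C ≠ ∞)
    (hfC : eLpNorm f (ENNReal.ofReal p) μ ≤ C) :
    ∫ x, ‖f x‖ ^ p ∂μ ≤ C.toReal ^ p := by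
  rw [hf.eLpNorm_eq_integral_rpow_norm (by simpa using hp) ENNReal.ofReal_ne_top,
    ENNReal.toReal_ofReal hp.le, ENNReal.ofReal_le_iff_le_toReal hC] at hfC
  exact (rpow_inv_le_iff_of_pos (integral_nonneg fun _ => by positivity)
    ENNReal.toReal_nonneg hp).1 hfC

theorem eLpNorm_prodMk_le {f : X → E} {g : X → F} (hf : AEStronglyMeasurable f μ)
    (hg : AEStronglyMeasurable g μ) (p : ℝ≥0∞) :
    eLpNorm (fun x => (f x, g x)) p μ ≤ p.LpAddConst * (eLpNorm f p μ + eLpNorm g p μ) :=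
  calc eLpNorm (fun x => (f x, g x)) p μ ≤ eLpNorm (fun x => ‖f x‖ + ‖g x‖) p μ :=
        eLpNorm_mono_real fun x => by simp [Prod.norm_def]
    _ ≤ p.LpAddConst * (eLpNorm (fun x => ‖f x‖) p μ + eLpNorm (fun x => ‖g x‖) p μ) :=
        eLpNorm_add_le' hf.norm hg.norm p
    _ = p.LpAddConst * (eLpNorm f p μ + eLpNorm g p μ) := by rw [eLpNorm_norm, eLpNorm_norm]

end MeasureTheory

def IsPosHomogeneous {E : Type*} [NormedAddCommGroup E] [NormedSpace ℝ E]
    (j : E → ℝ) (p : ℝ) : Prop :=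
  ∀ ⦃t : ℝ⦄, 0 < t → ∀ x, j (t • x) = t ^ p * j x

theorem isPosHomogeneous_abs_rpow_mul_abs_rpow (α β : ℝ) :
    IsPosHomogeneous (fun z : ℝ × ℝ => |z.1| ^ α * |z.2| ^ β) (α + β) := by
  intro t ht z
  simp only [Prod.smul_fst, Prod.smul_snd, smul_eq_mul, abs_mul, abs_of_pos ht,
    mul_rpow ht.le (abs_nonneg _), rpow_add ht]
  ring

theorem abs_map_add_sub_le_of_norm_le {E : Type*} [NormedAddCommGroup E] {j : E → ℝ}
    {p M c : ℝ} (hp : 0 ≤ p) (hM0 : 0 ≤ M) (hM : ∀ x, |j x| ≤ M * ‖x‖ ^ p) (hc : 0 ≤ c)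
    {x y : E} (hxy : ‖x‖ ≤ c * ‖y‖) :
    |j (x + y) - j x| ≤ M * ((c + 1) ^ p + c ^ p) * ‖y‖ ^ p := by
  have hsum : ‖x + y‖ ^ p ≤ (c + 1) ^ p * ‖y‖ ^ p := by
    rw [← mul_rpow (by positivity) (norm_nonneg _)]
    exact rpow_le_rpow (norm_nonneg _) (by linarith [norm_add_le x y]) hp
  have hx : ‖x‖ ^ p ≤ c ^ p * ‖y‖ ^ p := by
    rw [← mul_rpow hc (norm_nonneg _)]
    exact rpow_le_rpow (norm_nonneg _) hxy hp
  calc |j (x + y) - j x| ≤ |j (x + y)| + |j x| := abs_sub _ _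
    _ ≤ M * ‖x + y‖ ^ p + M * ‖x‖ ^ p := add_le_add (hM _) (hM _)
    _ ≤ M * ((c + 1) ^ p * ‖y‖ ^ p) + M * (c ^ p * ‖y‖ ^ p) := by gcongr
    _ = M * ((c + 1) ^ p + c ^ p) * ‖y‖ ^ p := by ring

namespace IsPosHomogeneous

variable {E : Type*} [NormedAddCommGroup E] [NormedSpace ℝ E] {j : E → ℝ} {p : ℝ}

theorem map_zero (hj : IsPosHomogeneous j p) (hp : 0 < p) : j 0 = 0 := by
  have h := hj two_pos 0
  rw [smul_zero] at h
  have : (1 : ℝ) < 2 ^ p := one_lt_rpow (by norm_num) hp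
  nlinarith

theorem map_eq_norm_rpow_mul (hj : IsPosHomogeneous j p) {x : E} (hx : x ≠ 0) (y : E) :
    j y = ‖x‖ ^ p * j (‖x‖⁻¹ • y) := by
  rw [← hj (norm_pos_iff.2 hx), smul_inv_smul₀ (norm_ne_zero_iff.2 hx)]

variable [ProperSpace E]

theorem exists_abs_le (hj : IsPosHomogeneous j p) (hp : 0 < p) (hjc : Continuous j) :
    ∃ M, 0 ≤ M ∧ ∀ x, |j x| ≤ M * ‖x‖ ^ p := by
  obtain ⟨M, hM⟩ := (isCompact_closedBall (0 : E) 1).exists_bound_of_continuousOn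
    hjc.continuousOn
  refine ⟨max M 0, le_max_right _ _, fun x => ?_⟩
  rcases eq_or_ne x 0 with rfl | hx
  · simp [hj.map_zero hp, zero_rpow hp.ne']
  have hunit : ‖x‖⁻¹ • x ∈ Metric.closedBall (0 : E) 1 := by
    simp [norm_smul, inv_mul_cancel₀ (norm_ne_zero_iff.2 hx)]
  rw [hj.map_eq_norm_rpow_mul hx x, abs_mul, abs_of_nonneg (by positivity), mul_comm]
  exact mul_le_mul_of_nonneg_right ((hM _ hunit).trans (le_max_left _ _)) (by positivity)

theorem exists_abs_sub_le (hj : IsPosHomogeneous j p) (hp : 0 < p) (hjc : Continuous j)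
    {ε : ℝ} (hε : 0 < ε) :
    ∃ K, ∀ x y, |j (x + y) - j x| ≤ ε * ‖x‖ ^ p + K * ‖y‖ ^ p := by
  obtain ⟨M, hM0, hM⟩ := hj.exists_abs_le hp hjc
  obtain ⟨δ, hδ0, hδ⟩ := Metric.uniformContinuousOn_iff.1
    ((isCompact_closedBall (0 : E) 2).uniformContinuousOn_of_continuous hjc.continuousOn) ε hε
  set η := min δ 1
  have hη0 : 0 < η := lt_min hδ0 one_pos
  have hK0 : 0 ≤ M * ((η⁻¹ + 1) ^ p + η⁻¹ ^ p) := by positivity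
  refine ⟨M * ((η⁻¹ + 1) ^ p + η⁻¹ ^ p), fun x y => ?_⟩
  rcases lt_or_ge ‖y‖ (η * ‖x‖) with hsmall | hlarge
  · -- rescaled by `‖x‖⁻¹`, the points `x + y` and `x` are `η`-close in the ball of radius 2
    have hx : x ≠ 0 := by rintro rfl; simp at hsmall; linarith [norm_nonneg y]
    have hxpos := norm_pos_iff.2 hx
    have hdist : ‖‖x‖⁻¹ • y‖ < η := by
      rw [norm_smul, norm_inv, norm_norm, inv_mul_lt_iff₀ hxpos]; linarith
    have hunit : ‖‖x‖⁻¹ • x‖ = 1 := by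
      rw [norm_smul, norm_inv, norm_norm, inv_mul_cancel₀ hxpos.ne']
    have hclose : |j (‖x‖⁻¹ • (x + y)) - j (‖x‖⁻¹ • x)| < ε := by
      refine hδ _ ?_ _ ?_ ?_
      · rw [mem_closedBall_zero_iff, smul_add]
        linarith [norm_add_le (‖x‖⁻¹ • x) (‖x‖⁻¹ • y), min_le_right δ 1]
      · rw [mem_closedBall_zero_iff, hunit]; norm_num
      · rw [dist_eq_norm, smul_add, add_sub_cancel_left]; linarith [min_le_left δ 1]
    rw [hj.map_eq_norm_rpow_mul hx (x + y), hj.map_eq_norm_rpow_mul hx x, ← mul_sub, abs_mul,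
      abs_of_nonneg (by positivity), mul_comm]
    calc |j (‖x‖⁻¹ • (x + y)) - j (‖x‖⁻¹ • x)| * ‖x‖ ^ p ≤ ε * ‖x‖ ^ p := by gcongr
      _ ≤ ε * ‖x‖ ^ p + M * ((η⁻¹ + 1) ^ p + η⁻¹ ^ p) * ‖y‖ ^ p :=
        le_add_of_nonneg_right (mul_nonneg hK0 (by positivity))
  · have hx : ‖x‖ ≤ η⁻¹ * ‖y‖ := by rw [inv_mul_eq_div, le_div_iff₀ hη0]; linarith
    exact (abs_map_add_sub_le_of_norm_le hp.le hM0 hM (by positivity) hx).trans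
      (le_add_of_nonneg_left (by positivity))

variable {X : Type*} [MeasurableSpace X] {μ : Measure X}

theorem integrable_comp (hj : IsPosHomogeneous j p) (hp : 0 < p) (hjc : Continuous j)
    {h : X → E} (hh : MemLp h (ENNReal.ofReal p) μ) : Integrable (fun x => j (h x)) μ := by
  obtain ⟨M, -, hM⟩ := hj.exists_abs_le hp hjc
  exact ((hh.integrable_norm_rpow_of_ofReal hp).const_mul M).mono'
    (hjc.comp_aestronglyMeasurable hh.1) (ae_of_all _ fun x => hM (h x))

theorem tendsto_integral_sub_comp_sub (hj : IsPosHomogeneous j p) (hp : 0 < p)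
    (hjc : Continuous j) {f : ℕ → X → E} {g : X → E} {C : ℝ≥0∞} (hC : C ≠ ∞)
    (hf : ∀ n, MemLp (f n) (ENNReal.ofReal p) μ)
    (hfC : ∀ n, eLpNorm (f n) (ENNReal.ofReal p) μ ≤ C)
    (hlim : ∀ᵐ x ∂μ, Tendsto (f · x) atTop (𝓝 (g x))) :
    Tendsto (fun n => ∫ x, (j (f n x) - j (f n x - g x)) ∂μ) atTop (𝓝 (∫ x, j (g x) ∂μ)) := by
  set q := ENNReal.ofReal p
  have hgC : eLpNorm g q μ ≤ C :=
    Lp.eLpNorm_le_of_ae_tendsto (Eventually.of_forall hfC) (fun n => (hf n).1) hlim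
  have hg : MemLp g q μ :=
    ⟨aestronglyMeasurable_of_tendsto_ae atTop (fun n => (hf n).1) hlim, hgC.trans_lt hC.lt_top⟩
  have hfg : ∀ n, MemLp (fun x => f n x - g x) q μ := fun n => (hf n).sub hg
  set C' := q.LpAddConst * (C + C)
  have hC' : C' ≠ ∞ := ENNReal.mul_ne_top (ENNReal.LpAddConst_lt_top q).ne
    (ENNReal.add_ne_top.2 ⟨hC, hC⟩)
  have hfgC : ∀ n, eLpNorm (f n - g) q μ ≤ C' := fun n =>
    (eLpNorm_sub_le' (hf n).1 hg.1 q).trans (mul_le_mul_right (add_le_add (hfC n) hgC) _)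
  set F : ℕ → X → ℝ := fun n x => |j (f n x) - j (f n x - g x) - j (g x)|
  have hF : Tendsto (fun n => ∫ x, F n x ∂μ) atTop (𝓝 0) := by
    refine tendsto_integral_of_forall_le_mul_add (W := fun n x => ‖f n x - g x‖ ^ p)
      (M := C'.toReal ^ p) (fun n => ?_) (fun n => ae_of_all _ fun x => abs_nonneg _) ?_
      (fun n => (hfg n).integrable_norm_rpow_of_ofReal hp)
      (fun n => ae_of_all _ fun x => by positivity)
      (fun n => (hfg n).integral_norm_rpow_le_of_ofReal hp hC' (hfgC n)) fun ε hε => ?_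
    · exact continuous_abs.comp_aestronglyMeasurable <|
        ((hjc.comp_aestronglyMeasurable (hf n).1).sub
          (hjc.comp_aestronglyMeasurable (hfg n).1)).sub (hjc.comp_aestronglyMeasurable hg.1)
    · filter_upwards [hlim] with x hx
      have hx₀ : Tendsto (fun n => f n x - g x) atTop (𝓝 0) := by
        simpa using hx.sub_const (g x)
      simpa [hj.map_zero hp] using ((((hjc.tendsto _).comp hx).sub
        ((hjc.tendsto _).comp hx₀)).sub_const (j (g x))).abs
    · obtain ⟨K, hK⟩ := hj.exists_abs_sub_le hp hjc hε
      obtain ⟨M, -, hM⟩ := hj.exists_abs_le hp hjc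
      refine ⟨fun x => (K + M) * ‖g x‖ ^ p, (hg.integrable_norm_rpow_of_ofReal hp).const_mul _,
        fun n => ae_of_all _ fun x => ?_⟩
      have hKx := hK (f n x - g x) (g x)
      rw [sub_add_cancel] at hKx
      calc F n x ≤ |j (f n x) - j (f n x - g x)| + |j (g x)| := abs_sub _ _
        _ ≤ ε * ‖f n x - g x‖ ^ p + K * ‖g x‖ ^ p + M * ‖g x‖ ^ p := add_le_add hKx (hM _)
        _ = ε * ‖f n x - g x‖ ^ p + (K + M) * ‖g x‖ ^ p := by ring
  rw [tendsto_iff_norm_sub_tendsto_zero]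
  refine squeeze_zero (fun n => norm_nonneg _) (fun n => ?_) hF
  have hI : ∫ x, (j (f n x) - j (f n x - g x) - j (g x)) ∂μ
      = ∫ x, (j (f n x) - j (f n x - g x)) ∂μ - ∫ x, j (g x) ∂μ :=
    integral_sub ((hj.integrable_comp hp hjc (hf n)).sub (hj.integrable_comp hp hjc (hfg n)))
      (hj.integrable_comp hp hjc hg)
  exact hI ▸ norm_integral_le_integral_norm _

end IsPosHomogeneous

theorem brezis_lieb_coupling_general (N : ℕ) (α β : ℝ)
    (hα : 1 < α) (hβ : 1 < β) (hαβ : α + β = 2 * N / ((N : ℝ) - 2))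
    (Ω : Set (EuclideanSpace ℝ (Fin N)))
    (u v : ℕ → EuclideanSpace ℝ (Fin N) → ℝ)
    (u₀ v₀ : EuclideanSpace ℝ (Fin N) → ℝ)
    (hu : ∀ n, MemLp (u n) (ENNReal.ofReal (2 * N / ((N : ℝ) - 2))) (volume.restrict Ω))
    (hv : ∀ n, MemLp (v n) (ENNReal.ofReal (2 * N / ((N : ℝ) - 2))) (volume.restrict Ω))
    (hbound : ∃ C : ℝ≥0∞, C < ⊤ ∧ ∀ n,
      eLpNorm (u n) (ENNReal.ofReal (2 * N / ((N : ℝ) - 2))) (volume.restrict Ω) ≤ C ∧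
      eLpNorm (v n) (ENNReal.ofReal (2 * N / ((N : ℝ) - 2))) (volume.restrict Ω) ≤ C)
    (huae : ∀ᵐ x ∂(volume.restrict Ω), Tendsto (fun n => u n x) atTop (nhds (u₀ x)))
    (hvae : ∀ᵐ x ∂(volume.restrict Ω), Tendsto (fun n => v n x) atTop (nhds (v₀ x))) :
    Tendsto (fun n => ∫ x in Ω,
        (|u n x| ^ α * |v n x| ^ β - |u n x - u₀ x| ^ α * |v n x - v₀ x| ^ β))
      atTop (nhds (∫ x in Ω, |u₀ x| ^ α * |v₀ x| ^ β)) := by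
  obtain ⟨C, hC, hCb⟩ := hbound
  rw [← hαβ] at hu hv hCb
  have hjc : Continuous fun z : ℝ × ℝ => |z.1| ^ α * |z.2| ^ β :=
    ((continuous_abs.comp continuous_fst).rpow_const fun _ => Or.inr (by linarith)).mul
      ((continuous_abs.comp continuous_snd).rpow_const fun _ => Or.inr (by linarith))
  exact (isPosHomogeneous_abs_rpow_mul_abs_rpow α β).tendsto_integral_sub_comp_sub
    (by linarith) hjc (f := fun n x => (u n x, v n x)) (g := fun x => (u₀ x, v₀ x))
    (ENNReal.mul_ne_top (ENNReal.LpAddConst_lt_top _).ne (ENNReal.add_ne_top.2 ⟨hC.ne, hC.ne⟩))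
    (fun n => memLp_prod_iff.2 ⟨hu n, hv n⟩)
    (fun n => (eLpNorm_prodMk_le (hu n).1 (hv n).1 _).trans
      (mul_le_mul_right (add_le_add (hCb n).1 (hCb n).2) _))
    (by filter_upwards [huae, hvae] with x hux hvx using hux.prodMk_nhds hvx)

/-- **Brezis–Lieb lemma for the coupling term**: if `Ω ⊆ ℝ^N` is open, `α, β > 1` with
`α + β = 2* = 2N/(N-2)`, and `(u_n), (v_n)` are bounded in `L^{2*}(Ω)` with
`u_n → u`, `v_n → v` a.e. on `Ω`, then
`∫_Ω (|u_n|^α |v_n|^β − |u_n−u|^α |v_n−v|^β) → ∫_Ω |u|^α |v|^β`. -/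
theorem brezis_lieb_coupling (N : ℕ) (hN : 3 ≤ N) (α β : ℝ)
    (hα : 1 < α) (hβ : 1 < β) (hαβ : α + β = 2 * N / ((N : ℝ) - 2))
    (Ω : Set (EuclideanSpace ℝ (Fin N))) (hΩ : IsOpen Ω)
    (u v : ℕ → EuclideanSpace ℝ (Fin N) → ℝ)
    (u₀ v₀ : EuclideanSpace ℝ (Fin N) → ℝ)
    (hu : ∀ n, MemLp (u n) (ENNReal.ofReal (2 * N / ((N : ℝ) - 2))) (volume.restrict Ω))
    (hv : ∀ n, MemLp (v n) (ENNReal.ofReal (2 * N / ((N : ℝ) - 2))) (volume.restrict Ω))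
    (hbound : ∃ C : ℝ≥0∞, C < ⊤ ∧ ∀ n,
      eLpNorm (u n) (ENNReal.ofReal (2 * N / ((N : ℝ) - 2))) (volume.restrict Ω) ≤ C ∧
      eLpNorm (v n) (ENNReal.ofReal (2 * N / ((N : ℝ) - 2))) (volume.restrict Ω) ≤ C)
    (huae : ∀ᵐ x ∂(volume.restrict Ω), Tendsto (fun n => u n x) atTop (nhds (u₀ x)))
    (hvae : ∀ᵐ x ∂(volume.restrict Ω), Tendsto (fun n => v n x) atTop (nhds (v₀ x))) :
    Tendsto (fun n => ∫ x in Ω,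
        (|u n x| ^ α * |v n x| ^ β - |u n x - u₀ x| ^ α * |v n x - v₀ x| ^ β))
      atTop (nhds (∫ x in Ω, |u₀ x| ^ α * |v₀ x| ^ β)) :=
  brezis_lieb_coupling_general N α β hα hβ hαβ Ω u v u₀ v₀ hu hv hbound huae hvae
end

section
/- Nondegeneracy of the Lagrange multiplier system for ν < 0: let α, β > 1 with α + β = 2* , let ν < 0, and let U, V, W be positive reals satisfying U > α|ν|W and V > β|ν|W (here U, V, W play the roles of ∫|u|^{2*}, ∫|v|^{2*}, ∫|u|^α|v|^β). Then ((2*−2)U + α(2−α)|ν|W)·((2*−2)V + β(2−β)|ν|W) > (αβ|ν|W)². -/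
/-!
Write `a = |ν| W ≥ 0` and use `2* - 2 = α + β - 2 > 0`. The first factor minus `αβa` is
`(α + β - 2)(U - αa) > 0`, and symmetrically for the second, so both factors exceed `αβa ≥ 0`
and their product exceeds `(αβa)²`.
-/

lemma mul_mul_lt_of_mul_lt {α β a U : ℝ} (hαβ : 2 < α + β) (hU : α * a < U) :
    α * β * a < (α + β - 2) * U + α * (2 - α) * a := by
  have hdiff : (α + β - 2) * U + α * (2 - α) * a - α * β * a = (α + β - 2) * (U - α * a) := by
    ring
  have hpos : 0 < (α + β - 2) * (U - α * a) := mul_pos (by linarith) (by linarith)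
  linarith

theorem lagrange_nondegeneracy_general (N : ℕ) (α β ν U V W : ℝ)
    (hα : 1 < α) (hβ : 1 < β) (hαβ : α + β = 2 * N / ((N : ℝ) - 2))
    (hW : 0 < W)
    (h1 : α * |ν| * W < U) (h2 : β * |ν| * W < V) :
    (α * β * |ν| * W) ^ 2 <
      ((2 * N / ((N : ℝ) - 2) - 2) * U + α * (2 - α) * |ν| * W) *
        ((2 * N / ((N : ℝ) - 2) - 2) * V + β * (2 - β) * |ν| * W) := by
  rw [← hαβ]
  simp only [mul_assoc] at h1 h2 ⊢
  have hA := mul_mul_lt_of_mul_lt (β := β) (by linarith) h1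
  have hB := mul_mul_lt_of_mul_lt (β := α) (by linarith) h2
  rw [add_comm β, mul_comm β] at hB
  simp only [mul_assoc] at hA hB
  have ha : 0 ≤ α * (β * (|ν| * W)) := by positivity
  rw [sq]
  exact mul_lt_mul'' hA hB ha ha

/-- Nondegeneracy of the Lagrange multiplier system for `ν < 0`: if `α, β > 1` with
`α + β = 2* = 2N/(N-2)`, and `U, V, W > 0` satisfy `U > α|ν|W` and `V > β|ν|W`, then
`((2*−2)U + α(2−α)|ν|W)((2*−2)V + β(2−β)|ν|W) > (αβ|ν|W)²`. -/
theorem lagrange_nondegeneracy (N : ℕ) (hN : 3 ≤ N) (α β ν U V W : ℝ)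
    (hα : 1 < α) (hβ : 1 < β) (hαβ : α + β = 2 * N / ((N : ℝ) - 2)) (hν : ν < 0)
    (hU : 0 < U) (hV : 0 < V) (hW : 0 < W)
    (h1 : α * |ν| * W < U) (h2 : β * |ν| * W < V) :
    (α * β * |ν| * W) ^ 2 <
      ((2 * N / ((N : ℝ) - 2) - 2) * U + α * (2 - α) * |ν| * W) *
        ((2 * N / ((N : ℝ) - 2) - 2) * V + β * (2 - β) * |ν| * W) :=
  lagrange_nondegeneracy_general N α β ν U V W hα hβ hαβ hW h1 h2
end

section
/- Let N ≥ 3, 2* = 2N/(N-2), α, β > 1 with α + β = 2*, and ν < 0. Let A₁, A₂, B₁, B₂, C be positive reals satisfying B₁^α B₂^β > α^α β^β C^{2*} (with C = |ν|∫|u|^α|v|^β etc.). Then there exist t₁ > 0 and s₁ > 0 such that A₁ t₁^{2-α} = B₁ t₁^β − α C s₁^β and A₂ s₁^{2-β} = B₂ s₁^α − β C t₁^α. -/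
/-!
Look for a solution with `s₁ = l * t₁`. Both equations then reduce to
`t₁ ^ (α + β - 2) = A₁ / (B₁ - α C l^β)`, which can be solved for `t₁` as soon as the ratio `l`
satisfies the balance equation `A₁ (B₂ l^α - β C) = A₂ l^(2-β) (B₁ - α C l^β)` with
`B₁ - α C l^β > 0`. The key inequality says exactly that `B₂ l^α - β C` becomes positive, at
`l = (β C / B₂)^(1/α)`, before `B₁ - α C l^β` vanishes, at `l = (B₁ / (α C))^(1/β)`; between these
two points the two sides of the balance equation cross.
-/

open Real Set

theorem exists_mem_Ioo_eq_of_lt_of_gt {f g : ℝ → ℝ} {a b : ℝ} (hab : a ≤ b)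
    (hf : ContinuousOn f (Icc a b)) (hg : ContinuousOn g (Icc a b))
    (ha : f a < g a) (hb : g b < f b) : ∃ c ∈ Ioo a b, f c = g c := by
  obtain ⟨c, hc, hfg⟩ := intermediate_value_Ioo hab (hf.sub hg)
    (show (0 : ℝ) ∈ Ioo (f a - g a) (f b - g b) from ⟨by linarith, by linarith⟩)
  exact ⟨c, hc, sub_eq_zero.mp hfg⟩

section NehariSystem

variable {α β A₁ A₂ B₁ B₂ C : ℝ}

theorem rpow_inv_lt_rpow_inv_of_mul_rpow_lt (hα : 0 < α) (hβ : 0 < β)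
    (hB₁ : 0 < B₁) (hB₂ : 0 < B₂) (hC : 0 < C)
    (hkey : α ^ α * β ^ β * C ^ (α + β) < B₁ ^ α * B₂ ^ β) :
    (β * C / B₂) ^ α⁻¹ < (B₁ / (α * C)) ^ β⁻¹ := by
  rw [← rpow_lt_rpow_iff (by positivity) (by positivity) (mul_pos hα hβ),
    ← rpow_mul (by positivity), ← rpow_mul (by positivity), inv_mul_cancel_left₀ hα.ne',
    show β⁻¹ * (α * β) = α by field_simp, div_rpow (by positivity) hB₂.le,
    div_rpow hB₁.le (by positivity), mul_rpow hβ.le hC.le, mul_rpow hα.le hC.le,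
    div_lt_div_iff₀ (by positivity) (by positivity)]
  rw [rpow_add hC] at hkey
  linarith

theorem exists_nehari_ratio (γ : ℝ) (hα : 0 < α) (hβ : 0 < β) (hA₁ : 0 < A₁) (hA₂ : 0 < A₂)
    (hB₁ : 0 < B₁) (hB₂ : 0 < B₂) (hC : 0 < C)
    (hkey : α ^ α * β ^ β * C ^ (α + β) < B₁ ^ α * B₂ ^ β) :
    ∃ l, 0 < l ∧ 0 < B₁ - α * C * l ^ β ∧
      A₁ * (B₂ * l ^ α - β * C) = A₂ * l ^ γ * (B₁ - α * C * l ^ β) := by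
  set a := (β * C / B₂) ^ α⁻¹
  set b := (B₁ / (α * C)) ^ β⁻¹
  have ha : 0 < a := by positivity
  have hab : a < b := rpow_inv_lt_rpow_inv_of_mul_rpow_lt hα hβ hB₁ hB₂ hC hkey
  have haα : a ^ α = β * C / B₂ := rpow_inv_rpow (by positivity) hα.ne'
  have hbβ : b ^ β = B₁ / (α * C) := rpow_inv_rpow (by positivity) hβ.ne'
  have pos_of_lt_b : ∀ x, 0 ≤ x → x < b → 0 < B₁ - α * C * x ^ β := by
    intro x hx hxb
    have := rpow_lt_rpow hx hxb hβ
    rw [hbβ, lt_div_iff₀ (by positivity)] at this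
    linarith
  have pos_of_a_lt : ∀ x, a < x → 0 < B₂ * x ^ α - β * C := by
    intro x hax
    have := rpow_lt_rpow ha.le hax hα
    rw [haα, div_lt_iff₀ hB₂] at this
    linarith
  have hne : ∀ x ∈ Icc a b, x ≠ 0 := fun x hx => (ha.trans_le hx.1).ne'
  obtain ⟨l, hl, hbal⟩ := exists_mem_Ioo_eq_of_lt_of_gt
    (f := fun l => A₁ * (B₂ * l ^ α - β * C)) (g := fun l => A₂ * l ^ γ * (B₁ - α * C * l ^ β))
    hab.le
    (by fun_prop (disch := exact fun x hx => Or.inl (hne x hx)))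
    (by fun_prop (disch := exact fun x hx => Or.inl (hne x hx)))
    (by
      have := pos_of_lt_b a ha.le hab
      simp only [haα, mul_div_cancel₀ _ hB₂.ne', sub_self, mul_zero]
      positivity)
    (by
      have := pos_of_a_lt b hab
      simp only [hbβ, mul_div_cancel₀ _ (mul_pos hα hC).ne', sub_self, mul_zero]
      positivity)
  have hl0 : 0 < l := ha.trans hl.1
  exact ⟨l, hl0, pos_of_lt_b l hl0.le hl.2, hbal⟩

theorem exists_nehari_scaling {l : ℝ} (hαβ : α + β ≠ 2) (hA₁ : 0 < A₁) (hl : 0 < l)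
    (hP : 0 < B₁ - α * C * l ^ β)
    (hbal : A₁ * (B₂ * l ^ α - β * C) = A₂ * l ^ (2 - β) * (B₁ - α * C * l ^ β)) :
    ∃ t, 0 < t ∧ A₁ * t ^ (2 - α) = B₁ * t ^ β - α * C * (l * t) ^ β ∧
      A₂ * (l * t) ^ (2 - β) = B₂ * (l * t) ^ α - β * C * t ^ α := by
  set P := B₁ - α * C * l ^ β
  set t := (A₁ / P) ^ (α + β - 2)⁻¹
  have ht : 0 < t := by positivity
  have htp : t ^ (α + β - 2) = A₁ / P := rpow_inv_rpow (by positivity) (sub_ne_zero.mpr hαβ)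
  have htβ : t ^ β = t ^ (2 - α) * (A₁ / P) := by
    rw [← htp, ← rpow_add ht]; ring_nf
  have htα : t ^ α = t ^ (2 - β) * (A₁ / P) := by
    rw [← htp, ← rpow_add ht]; ring_nf
  refine ⟨t, ht, ?_, ?_⟩
  · rw [mul_rpow hl.le ht.le, htβ]
    field_simp
    ring
  · rw [mul_rpow hl.le ht.le, mul_rpow hl.le ht.le, htα]
    field_simp
    exact hbal.symm

end NehariSystem

theorem nehari_projection_negative_coupling_general (N : ℕ)
    (α β A₁ A₂ B₁ B₂ C : ℝ)
    (hα : 1 < α) (hβ : 1 < β) (hαβ : α + β = 2 * N / ((N : ℝ) - 2))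
    (hA₁ : 0 < A₁) (hA₂ : 0 < A₂) (hB₁ : 0 < B₁) (hB₂ : 0 < B₂) (hC : 0 < C)
    (hkey : α ^ α * β ^ β * C ^ (2 * N / ((N : ℝ) - 2)) < B₁ ^ α * B₂ ^ β) :
    ∃ t₁ s₁ : ℝ, 0 < t₁ ∧ 0 < s₁ ∧
      A₁ * t₁ ^ (2 - α) = B₁ * t₁ ^ β - α * C * s₁ ^ β ∧
      A₂ * s₁ ^ (2 - β) = B₂ * s₁ ^ α - β * C * t₁ ^ α := by
  rw [← hαβ] at hkey
  obtain ⟨l, hl, hP, hbal⟩ :=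
    exists_nehari_ratio (2 - β) (by linarith) (by linarith) hA₁ hA₂ hB₁ hB₂ hC hkey
  obtain ⟨t, ht, h₁, h₂⟩ := exists_nehari_scaling (by linarith) hA₁ hl hP hbal
  exact ⟨t, l * t, ht, mul_pos hl ht, h₁, h₂⟩

/-- Projection onto the Nehari manifold for negative coupling: with `α, β > 1`,
`α + β = 2* = 2N/(N-2)`, `ν < 0`, and positive reals `A₁, A₂, B₁, B₂, C` satisfying
`B₁^α B₂^β > α^α β^β C^{2*}`, there exist `t₁, s₁ > 0` with
`A₁ t₁^{2-α} = B₁ t₁^β − α C s₁^β` and `A₂ s₁^{2-β} = B₂ s₁^α − β C t₁^α`. -/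
theorem nehari_projection_negative_coupling (N : ℕ) (hN : 3 ≤ N)
    (α β ν A₁ A₂ B₁ B₂ C : ℝ)
    (hα : 1 < α) (hβ : 1 < β) (hαβ : α + β = 2 * N / ((N : ℝ) - 2)) (hν : ν < 0)
    (hA₁ : 0 < A₁) (hA₂ : 0 < A₂) (hB₁ : 0 < B₁) (hB₂ : 0 < B₂) (hC : 0 < C)
    (hkey : α ^ α * β ^ β * C ^ (2 * N / ((N : ℝ) - 2)) < B₁ ^ α * B₂ ^ β) :
    ∃ t₁ s₁ : ℝ, 0 < t₁ ∧ 0 < s₁ ∧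
      A₁ * t₁ ^ (2 - α) = B₁ * t₁ ^ β - α * C * s₁ ^ β ∧
      A₂ * s₁ ^ (2 - β) = B₂ * s₁ ^ α - β * C * t₁ ^ α :=
  nehari_projection_negative_coupling_general N α β A₁ A₂ B₁ B₂ C hα hβ hαβ hA₁ hA₂ hB₁ hB₂ hC hkey
end

section
/- Explicit Hardy–Sobolev extremal: for N ≥ 3 and λ ∈ (0, Λ_N), let a_λ = (N−2)/2 − √(Λ_N − λ) and A(N,λ) = N(N−2−2a_λ)²/(N−2). Then the function z(x) = A(N,λ)^{(N-2)/4} / (|x|^{a_λ}(1 + |x|^{2 − 4a_λ/(N−2)})^{(N−2)/2}) is a positive classical solution of −Δz − (λ/|x|²) z = z^{2*−1} on ℝ^N \ {0}. -/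
/-!
Write `z(x) = ψ(|x|²)`. For `u = ψ(|·|²)` one has `Δu(x) = 2N ψ'(t) + 4t ψ''(t)` with
`t = |x|²`, so the PDE becomes an ODE for `ψ(t) = C t^p (1 + t^q)^s`, where `p = -a/2`,
`q = 1 - 2a/(N-2)`, `s = -(N-2)/2` and `C = A^{(N-2)/4}`. The family `t^α (1 + t^q)^β` is
closed under `d/dt` up to linear combinations, and after dividing by `C t^{p-1} (1 + t^q)^{s-2}`
both sides of the ODE are polynomials in `T = t^q`. Comparing coefficients: `T⁰` and `T²`
vanish because `a` solves `a² - (N-2)a + λ = 0`, and the `T¹` coefficient is exactly the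
constant `A`.
-/

open MeasureTheory Real Filter Topology Set

noncomputable section

/-- The Laplacian of `u : ℝ^N → ℝ`, as the trace of the second derivative. -/
def lap {N : ℕ} (u : EuclideanSpace ℝ (Fin N) → ℝ)
    (x : EuclideanSpace ℝ (Fin N)) : ℝ :=
  ∑ i : Fin N,
    iteratedFDeriv ℝ 2 u x ![EuclideanSpace.single i 1, EuclideanSpace.single i 1]

open scoped RealInnerProductSpace

section Radial

theorem fderiv_fderiv_comp_norm_sq {E : Type*} [NormedAddCommGroup E] [InnerProductSpace ℝ E]
    {ψ : ℝ → ℝ} {x : E} (hψ : ∀ᶠ t in 𝓝 (‖x‖ ^ 2), DifferentiableAt ℝ ψ t)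
    (hψ' : DifferentiableAt ℝ (deriv ψ) (‖x‖ ^ 2)) (v w : E) :
    fderiv ℝ (fderiv ℝ fun y => ψ (‖y‖ ^ 2)) x v w =
      2 * deriv ψ (‖x‖ ^ 2) * ⟪v, w⟫ + 4 * deriv (deriv ψ) (‖x‖ ^ 2) * ⟪x, v⟫ * ⟪x, w⟫ := by
  have hsq (y : E) : HasFDerivAt (fun y : E => ‖y‖ ^ 2) (2 • innerSL ℝ y) y :=
    (hasStrictFDerivAt_norm_sq y).hasFDerivAt
  have hfirst : fderiv ℝ (fun y => ψ (‖y‖ ^ 2)) =ᶠ[𝓝 x]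
      fun y => (2 * deriv ψ (‖y‖ ^ 2)) • innerSL ℝ y := by
    have hcont : ContinuousAt (fun y : E => ‖y‖ ^ 2) x := by fun_prop
    filter_upwards [hcont.eventually hψ] with y hy
    refine (hy.hasDerivAt.comp_hasFDerivAt y (hsq y)).fderiv.trans ?_
    ext v
    simp
    ring
  have hsecond := ((hψ'.hasDerivAt.comp_hasFDerivAt x (hsq x)).const_mul 2).fun_smul
    (innerSL ℝ : E →L[ℝ] E →L[ℝ] ℝ).hasFDerivAt
  rw [(hsecond.congr_of_eventuallyEq hfirst).fderiv]
  simp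
  rw [innerSL_apply_apply, innerSL_apply_apply]
  ring

variable {N : ℕ} {x : EuclideanSpace ℝ (Fin N)}

theorem Filter.EventuallyEq.lap_eq {u v : EuclideanSpace ℝ (Fin N) → ℝ} (h : u =ᶠ[𝓝 x] v) :
    lap u x = lap v x := by
  simp only [lap, (h.iteratedFDeriv ℝ 2).eq_of_nhds]

theorem lap_comp_norm_sq {ψ : ℝ → ℝ} (hψ : ∀ᶠ t in 𝓝 (‖x‖ ^ 2), DifferentiableAt ℝ ψ t)
    (hψ' : DifferentiableAt ℝ (deriv ψ) (‖x‖ ^ 2)) :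
    lap (fun y => ψ (‖y‖ ^ 2)) x =
      2 * N * deriv ψ (‖x‖ ^ 2) + 4 * ‖x‖ ^ 2 * deriv (deriv ψ) (‖x‖ ^ 2) := by
  simp only [lap, iteratedFDeriv_two_apply, Matrix.cons_val_zero, Matrix.cons_val_one,
    fderiv_fderiv_comp_norm_sq hψ hψ', EuclideanSpace.inner_single_right,
    PiLp.single_apply, if_pos, conj_trivial, one_mul, mul_one]
  rw [Finset.sum_add_distrib, Finset.sum_const, Finset.card_univ, Fintype.card_fin, nsmul_eq_mul]
  simp only [mul_assoc, ← Finset.mul_sum, ← sq, ← EuclideanSpace.real_norm_sq_eq]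
  ring

end Radial

def profile (α q β t : ℝ) : ℝ := t ^ α * (1 + t ^ q) ^ β

section Profile

variable (α q β : ℝ) {t : ℝ}

theorem profile_pos (ht : 0 < t) : 0 < profile α q β t := by
  unfold profile
  positivity

theorem profile_rpow (γ : ℝ) (ht : 0 < t) :
    profile α q β t ^ γ = profile (α * γ) q (β * γ) t := by
  have hS : 0 ≤ 1 + t ^ q := by positivity
  rw [profile, profile, mul_rpow (by positivity) (by positivity), ← rpow_mul ht.le,
    ← rpow_mul hS]

theorem hasDerivAt_profile (ht : 0 < t) :
    HasDerivAt (profile α q β)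
      (α * profile (α - 1) q β t + β * q * profile (α + q - 1) q (β - 1) t) t := by
  have hS : 0 < 1 + t ^ q := by positivity
  have hpow := hasDerivAt_rpow_const (p := α) (Or.inl ht.ne')
  have hbase := (hasDerivAt_rpow_const (p := q) (Or.inl ht.ne')).const_add 1
  have hcomp := (hasDerivAt_rpow_const (p := β) (Or.inl hS.ne')).comp t hbase
  refine (hpow.mul hcomp).congr_deriv ?_
  simp only [profile, Function.comp_apply, rpow_add ht, rpow_sub_one ht.ne']
  ring

theorem hasDerivAt_deriv_profile (ht : 0 < t) :
    HasDerivAt (deriv (profile α q β))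
      (α * ((α - 1) * profile (α - 1 - 1) q β t + β * q * profile (α - 1 + q - 1) q (β - 1) t) +
        β * q * ((α + q - 1) * profile (α + q - 1 - 1) q (β - 1) t +
          (β - 1) * q * profile (α + q - 1 + q - 1) q (β - 1 - 1) t)) t := by
  have hderiv : deriv (profile α q β) =ᶠ[𝓝 t]
      fun t => α * profile (α - 1) q β t + β * q * profile (α + q - 1) q (β - 1) t := by
    filter_upwards [Ioi_mem_nhds ht] with t ht using (hasDerivAt_profile α q β ht).deriv
  exact (((hasDerivAt_profile _ q _ ht).const_mul α).add
    ((hasDerivAt_profile _ q _ ht).const_mul (β * q))).congr_of_eventuallyEq hderiv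

end Profile

def hardySobolevConst (n a : ℝ) : ℝ := n * (n - 2 - 2 * a) ^ 2 / (n - 2)

def hardySobolevProfile (n a : ℝ) : ℝ → ℝ := fun t =>
  hardySobolevConst n a ^ ((n - 2) / 4) * profile (-a / 2) (1 - 2 * a / (n - 2)) (-((n - 2) / 2)) t

section HardySobolevProfile

variable {n a t : ℝ}

theorem hardySobolevConst_nonneg (hn : 2 < n) : 0 ≤ hardySobolevConst n a :=
  div_nonneg (mul_nonneg (by linarith) (sq_nonneg _)) (by linarith)

theorem hardySobolevConst_pos (hn : 2 < n) (ha : 2 * a < n - 2) : 0 < hardySobolevConst n a :=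
  div_pos (mul_pos (by linarith) (pow_pos (by linarith) 2)) (by linarith)

theorem hardySobolevProfile_pos (hn : 2 < n) (ha : 2 * a < n - 2) (ht : 0 < t) :
    0 < hardySobolevProfile n a t :=
  mul_pos (rpow_pos_of_pos (hardySobolevConst_pos hn ha) _) (profile_pos _ _ _ ht)

theorem hardySobolevProfile_sq {r : ℝ} (hr : 0 < r) :
    hardySobolevProfile n a (r ^ 2) = hardySobolevConst n a ^ ((n - 2) / 4) /
      (r ^ a * (1 + r ^ (2 - 4 * a / (n - 2))) ^ ((n - 2) / 2)) := by
  have hS : 0 ≤ 1 + r ^ (2 - 4 * a / (n - 2)) := by positivity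
  have hexp₁ : 2 * (-a / 2) = -a := by ring
  have hexp₂ : 2 * (1 - 2 * a / (n - 2)) = 2 - 4 * a / (n - 2) := by ring
  rw [hardySobolevProfile, profile, ← rpow_two, ← rpow_mul hr.le, ← rpow_mul hr.le, hexp₁,
    hexp₂, rpow_neg hr.le, rpow_neg hS]
  ring

theorem differentiableAt_hardySobolevProfile (ht : 0 < t) :
    DifferentiableAt ℝ (hardySobolevProfile n a) t := by
  unfold hardySobolevProfile
  exact (hasDerivAt_profile _ _ _ ht).differentiableAt.const_mul _

theorem differentiableAt_deriv_hardySobolevProfile (ht : 0 < t) :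
    DifferentiableAt ℝ (deriv (hardySobolevProfile n a)) t := by
  unfold hardySobolevProfile
  rw [deriv_const_mul_field']
  exact (hasDerivAt_deriv_profile _ _ _ ht).differentiableAt.const_mul _

theorem hardySobolevProfile_ode {lam : ℝ} (hn : 2 < n) (hlam : lam = (n - 2) * a - a ^ 2)
    (ht : 0 < t) :
    -(2 * n * deriv (hardySobolevProfile n a) t +
        4 * t * deriv (deriv (hardySobolevProfile n a)) t) - lam / t * hardySobolevProfile n a t =
      hardySobolevProfile n a t ^ (2 * n / (n - 2) - 1) := by
  have hn2 : n - 2 ≠ 0 := by linarith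
  have hA := hardySobolevConst_nonneg (a := a) hn
  have hexpA : (n - 2) / 4 * (2 * n / (n - 2) - 1) = (n - 2) / 4 + 1 := by field_simp; ring
  have hexpt : -a / 2 * (2 * n / (n - 2) - 1) = -a / 2 + (1 - 2 * a / (n - 2)) - 1 := by
    field_simp; ring
  have hexpS : -((n - 2) / 2) * (2 * n / (n - 2) - 1) = -((n - 2) / 2) - 1 - 1 := by
    field_simp; ring
  unfold hardySobolevProfile
  generalize hp : -a / 2 = p at hexpt ⊢
  generalize hq : 1 - 2 * a / (n - 2) = q at hexpt ⊢
  generalize hs : -((n - 2) / 2) = s at hexpS ⊢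
  generalize hC : hardySobolevConst n a = A at hA ⊢
  have hS : 0 < 1 + t ^ q := by positivity
  simp only [deriv_const_mul_field', (hasDerivAt_profile p q s ht).deriv,
    (hasDerivAt_deriv_profile p q s ht).deriv]
  rw [mul_rpow (by positivity) (profile_pos p q s ht).le, ← rpow_mul hA, hexpA,
    rpow_add' hA (by linarith), rpow_one, profile_rpow _ _ _ _ ht, hexpt, hexpS]
  simp only [profile, rpow_add ht, rpow_sub_one ht.ne', rpow_sub_one hS.ne']
  generalize A ^ ((n - 2) / 4) = C
  generalize t ^ p = X
  generalize (1 + t ^ q) ^ s = Y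
  generalize t ^ q = T at hS ⊢
  subst hlam hp hq hs hC
  unfold hardySobolevConst
  field_simp
  ring

end HardySobolevProfile

theorem mul_half_sub_sqrt_sub_sq {m c : ℝ} (hc : c ≤ m ^ 2 / 4) :
    m * (m / 2 - √(m ^ 2 / 4 - c)) - (m / 2 - √(m ^ 2 / 4 - c)) ^ 2 = c := by
  linear_combination -sq_sqrt (sub_nonneg.2 hc)

theorem explicit_hardy_sobolev_extremal_general (N : ℕ) (hN : 3 ≤ N) (lam : ℝ)
    (hlam' : lam < ((N : ℝ) - 2) ^ 2 / 4) :
    let a : ℝ := ((N : ℝ) - 2) / 2 - Real.sqrt (((N : ℝ) - 2) ^ 2 / 4 - lam)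
    let A : ℝ := N * ((N : ℝ) - 2 - 2 * a) ^ 2 / ((N : ℝ) - 2)
    let z : EuclideanSpace ℝ (Fin N) → ℝ := fun x =>
      A ^ (((N : ℝ) - 2) / 4) /
        (‖x‖ ^ a * (1 + ‖x‖ ^ (2 - 4 * a / ((N : ℝ) - 2))) ^ (((N : ℝ) - 2) / 2))
    ∀ x : EuclideanSpace ℝ (Fin N), x ≠ 0 →
      0 < z x ∧
      -lap z x - lam / ‖x‖ ^ 2 * z x = z x ^ (2 * N / ((N : ℝ) - 2) - 1) := by
  intro a A z x hx
  have hn : (2 : ℝ) < N := by exact_mod_cast hN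
  have hlam_a : lam = ((N : ℝ) - 2) * a - a ^ 2 := (mul_half_sub_sqrt_sub_sq hlam'.le).symm
  have ha : 2 * a < N - 2 := by
    have : 0 < √(((N : ℝ) - 2) ^ 2 / 4 - lam) := sqrt_pos.2 (by linarith)
    dsimp only [a]
    linarith
  have hz : z =ᶠ[𝓝 x] fun y => hardySobolevProfile N a (‖y‖ ^ 2) := by
    filter_upwards [eventually_ne_nhds hx] with y hy
    exact (hardySobolevProfile_sq (norm_pos_iff.2 hy)).symm
  have ht : 0 < ‖x‖ ^ 2 := by positivity
  have hψ : ∀ᶠ t in 𝓝 (‖x‖ ^ 2), DifferentiableAt ℝ (hardySobolevProfile N a) t := by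
    filter_upwards [Ioi_mem_nhds ht] with t ht using differentiableAt_hardySobolevProfile ht
  rw [hz.eq_of_nhds, hz.lap_eq, lap_comp_norm_sq hψ (differentiableAt_deriv_hardySobolevProfile ht)]
  exact ⟨hardySobolevProfile_pos hn ha ht, hardySobolevProfile_ode hn hlam_a ht⟩

/-- **Explicit Hardy–Sobolev extremal** (Terracini): for `N ≥ 3`, `λ ∈ (0, Λ_N)`,
with `a_λ = (N−2)/2 − √(Λ_N − λ)` and `A(N,λ) = N(N−2−2a_λ)²/(N−2)`, the function
`z(x) = A(N,λ)^{(N−2)/4} / (|x|^{a_λ}(1 + |x|^{2−4a_λ/(N−2)})^{(N−2)/2})` is a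
positive classical solution of `−Δz − (λ/|x|²)z = z^{2*−1}` on `ℝ^N \ {0}`. -/
theorem explicit_hardy_sobolev_extremal (N : ℕ) (hN : 3 ≤ N) (lam : ℝ)
    (hlam : 0 < lam) (hlam' : lam < ((N : ℝ) - 2) ^ 2 / 4) :
    let a : ℝ := ((N : ℝ) - 2) / 2 - Real.sqrt (((N : ℝ) - 2) ^ 2 / 4 - lam)
    let A : ℝ := N * ((N : ℝ) - 2 - 2 * a) ^ 2 / ((N : ℝ) - 2)
    let z : EuclideanSpace ℝ (Fin N) → ℝ := fun x =>
      A ^ (((N : ℝ) - 2) / 4) /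
        (‖x‖ ^ a * (1 + ‖x‖ ^ (2 - 4 * a / ((N : ℝ) - 2))) ^ (((N : ℝ) - 2) / 2))
    ∀ x : EuclideanSpace ℝ (Fin N), x ≠ 0 →
      0 < z x ∧
      -lap z x - lam / ‖x‖ ^ 2 * z x = z x ^ (2 * N / ((N : ℝ) - 2) - 1) :=
  explicit_hardy_sobolev_extremal_general N hN lam hlam'
end
end
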